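/- Let S be a commutative ring in which 2 is a nonzerodivisor, let ū ∈ S[[u]] be a power series with zero constant term satisfying ū ≡ −u mod (u²), and let σ : S[[u]] → S[[u]] be the S-algebra endomorphism given by substituting u ↦ ū; assume σ is an involution, i.e. σ(ū) = u. Assume further that there exists a ∈ S whose image in S/2S is a nonzerodivisor and such that ū ≡ u + a·u² modulo the ideal of S[[u]] generated by 2 and u³. Then every f ∈ S[[u]] with σ(f) = −f can be written as f = g − σ(g) for some g ∈ S[[u]]; that is, the set {f ∈ S[[u]] : σ(f) = −f} equals {g − σ(g) : g ∈ S[[u]]}. -/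

import Mathlib

/-!
Write `ū = u·v` with `v ≡ -1 mod u`. If `σ f = -f` and `f = uⁿ q`, then `vⁿ σ(q) = -q`.
Its constant term gives `q(0) = 0` for even `n`; for odd `n` its `u`-coefficient gives
`n v₁ q(0) ∈ 2S` with `v₁ ≡ a mod 2`, so `q(0) = 2s` because `a` is regular mod 2. Either way
`f - (1 - σ)(s uⁿ)` is divisible by `uⁿ⁺¹`. As `σ² = 1`, every `f - (1 - σ) g'` is again
antifixed, so the step repeats, and the corrections `s uⁿ` sum `u`-adically to a `g` with
`f = (1 - σ) g`.
-/

open PowerSeries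

/-- Substitution of the power series `w` (with zero constant term) into the power
series `f`: the coefficient of `u^n` in `f(w)` is `∑_{k ≤ n} f_k · (w^k)_n`,
which is the usual composition of formal power series. -/
noncomputable def PowerSeries.substInto {S : Type*} [CommRing S] (w f : PowerSeries S) :
    PowerSeries S :=
  PowerSeries.mk fun n =>
    ∑ k ∈ Finset.range (n + 1), PowerSeries.coeff k f * PowerSeries.coeff n (w ^ k)

namespace PowerSeries

variable {R : Type*} [CommRing R]

theorem substInto_eq_subst {w : R⟦X⟧} (hw : constantCoeff w = 0) (f : R⟦X⟧) :
    w.substInto f = f.subst w := by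
  ext n
  rw [coeff_subst' (.of_constantCoeff_zero' hw), substInto, coeff_mk,
    finsum_eq_sum_of_support_subset _ (s := Finset.range (n + 1)) ?_]
  · rfl
  intro k hk
  by_contra hkn
  have hdvd : X ^ k ∣ w ^ k := pow_dvd_pow_of_dvd (X_dvd_iff.2 hw) k
  exact hk (by simp [X_pow_dvd_iff.1 hdvd n (by simpa using hkn)])

theorem X_pow_dvd_subst {w : R⟦X⟧} (hw : constantCoeff w = 0) {n : ℕ} {g : R⟦X⟧}
    (hg : X ^ n ∣ g) : X ^ n ∣ g.subst w := by
  have hs : HasSubst w := .of_constantCoeff_zero' hw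
  obtain ⟨q, rfl⟩ := hg
  rw [subst_mul hs, subst_pow hs, subst_X hs]
  exact (pow_dvd_pow_of_dvd (X_dvd_iff.2 hw) n).mul_right _

theorem subst_subst_of_subst_self_eq_X {w : R⟦X⟧} (hw : constantCoeff w = 0)
    (hinv : (w.subst w : R⟦X⟧) = X) (g : R⟦X⟧) : subst w (subst w g) = g := by
  have hs : HasSubst w := .of_constantCoeff_zero' hw
  rw [subst_comp_subst_apply hs hs, hinv, X_subst]

theorem subst_eq_X_mul_add_C {w : R⟦X⟧} (hw : constantCoeff w = 0) (g : R⟦X⟧) :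
    g.subst w = w * (mk fun p => coeff (p + 1) g).subst w + C (constantCoeff g) := by
  have hs : HasSubst w := .of_constantCoeff_zero' hw
  conv_lhs => rw [eq_X_mul_shift_add_const g]
  rw [subst_add hs, subst_mul hs, subst_X hs, subst_C]
  rfl

theorem constantCoeff_subst_of_constantCoeff_eq_zero {w : R⟦X⟧} (hw : constantCoeff w = 0)
    (g : R⟦X⟧) : constantCoeff (g.subst w) = constantCoeff g := by
  rw [subst_eq_X_mul_add_C hw, map_add, map_mul, hw, zero_mul, zero_add, constantCoeff_C]

theorem coeff_one_subst {w : R⟦X⟧} (hw : constantCoeff w = 0)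
    (g : R⟦X⟧) : coeff 1 (g.subst w) = coeff 1 g * coeff 1 w := by
  rw [subst_eq_X_mul_add_C hw, map_add, coeff_one_mul, hw,
    constantCoeff_subst_of_constantCoeff_eq_zero hw, coeff_C, if_neg one_ne_zero]
  simp [mul_comm]

theorem eq_zero_of_forall_X_pow_dvd {φ : R⟦X⟧} (h : ∀ n, X ^ n ∣ φ) : φ = 0 := by
  ext n
  exact X_pow_dvd_iff.1 (h (n + 1)) n n.lt_succ_self

/-- `X`-adic completeness of `R⟦X⟧`. -/
theorem exists_X_pow_dvd_sub_of_X_pow_dvd_sub_succ {G : ℕ → R⟦X⟧}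
    (hG : ∀ n, X ^ n ∣ G n - G (n + 1)) : ∃ g, ∀ n, X ^ n ∣ g - G n := by
  have hstable : ∀ n m, n ≤ m → X ^ n ∣ G n - G m := by
    intro n m hnm
    induction hnm with
    | refl => simp
    | step hnm ih =>
      rw [← sub_add_sub_cancel]
      exact dvd_add ih ((pow_dvd_pow X hnm).trans (hG _))
  refine ⟨mk fun k => coeff k (G (k + 1)), fun n => X_pow_dvd_iff.2 fun k hk => ?_⟩
  rw [map_sub, coeff_mk, ← map_sub]
  exact X_pow_dvd_iff.1 (hstable (k + 1) n hk) k k.lt_succ_self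

theorem exists_eq_of_forall_X_pow_dvd_sub {T : R⟦X⟧ →+ R⟦X⟧}
    (hT : ∀ n g, X ^ n ∣ g → X ^ n ∣ T g) {f : R⟦X⟧}
    (hstep : ∀ n g, X ^ n ∣ f - T g → ∃ g', X ^ n ∣ g - g' ∧ X ^ (n + 1) ∣ f - T g') :
    ∃ g, T g = f := by
  choose! next hnext using hstep
  let G : ℕ → R⟦X⟧ := fun n => Nat.rec 0 next n
  have hG : ∀ n, X ^ n ∣ f - T (G n) := by
    intro n
    induction n with
    | zero => simp
    | succ n ih => exact (hnext n (G n) ih).2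
  obtain ⟨g, hg⟩ := exists_X_pow_dvd_sub_of_X_pow_dvd_sub_succ fun n => (hnext n (G n) (hG n)).1
  refine ⟨g, (sub_eq_zero.1 (eq_zero_of_forall_X_pow_dvd fun n => ?_)).symm⟩
  have : f - T g = (f - T (G n)) - T (g - G n) := by rw [map_sub]; abel
  rw [this]
  exact dvd_sub (hG n) (hT n _ (hg n))

end PowerSeries

theorem Ideal.mem_of_mul_mem_of_mk_mem_nonZeroDivisors {R : Type*} [CommRing R] {I : Ideal R}
    {a x : R} (ha : Ideal.Quotient.mk I a ∈ nonZeroDivisors (R ⧸ I)) (h : a * x ∈ I) : x ∈ I := by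
  rw [← Ideal.Quotient.eq_zero_iff_mem] at h ⊢
  exact ha.1 _ (by rwa [← map_mul])

section Involution
variable {S : Type*} [CommRing S] {ubar v f q : S⟦X⟧} {n : ℕ}

theorem mul_subst_eq_neg_of_subst_eq_neg (hv : ubar = X * v) (hf : f.subst ubar = -f)
    (hq : f = X ^ n * q) : v ^ n * q.subst ubar = -q := by
  have hs : HasSubst ubar := .of_constantCoeff_zero' (by simp [hv])
  have hpow : ubar ^ n = X ^ n * v ^ n := by rw [hv, mul_pow]
  rw [hq, subst_mul hs, subst_pow hs, subst_X hs, hpow, mul_assoc, ← mul_neg] at hf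
  exact X_pow_mul_cancel hf

theorem constantCoeff_eq_zero_of_even (h2 : (2 : S) ∈ nonZeroDivisors S) (hv : ubar = X * v)
    (hv0 : constantCoeff v = -1) (hf : f.subst ubar = -f) (hq : f = X ^ n * q) (hn : Even n) :
    constantCoeff q = 0 := by
  have h := congrArg constantCoeff (mul_subst_eq_neg_of_subst_eq_neg hv hf hq)
  rw [map_mul, map_pow, hv0, hn.neg_one_pow, one_mul, map_neg,
    constantCoeff_subst_of_constantCoeff_eq_zero (by simp [hv])] at h
  exact h2.1 _ (by linear_combination h)

theorem constantCoeff_mem_span_two_of_odd {a : S}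
    (ha : Ideal.Quotient.mk (Ideal.span {(2 : S)}) a ∈ nonZeroDivisors (S ⧸ Ideal.span {(2 : S)}))
    (hva : coeff 1 v - a ∈ Ideal.span {(2 : S)}) (hv : ubar = X * v)
    (hv0 : constantCoeff v = -1) (hf : f.subst ubar = -f) (hq : f = X ^ n * q) (hn : Odd n) :
    constantCoeff q ∈ Ideal.span {(2 : S)} := by
  have hw : constantCoeff ubar = 0 := by simp [hv]
  have h := congrArg (coeff 1) (mul_subst_eq_neg_of_subst_eq_neg hv hf hq)
  have hw1 : coeff 1 ubar = -1 := by simpa [hv] using hv0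
  rw [coeff_one_mul, coeff_one_pow, map_pow, hv0, map_neg, coeff_one_subst hw,
    constantCoeff_subst_of_constantCoeff_eq_zero hw, hw1] at h
  obtain ⟨m, rfl⟩ := hn
  have hcq : coeff 1 v * constantCoeff q ∈ Ideal.span {(2 : S)} := by
    rw [Ideal.mem_span_singleton]
    exact ⟨-(coeff 1 q) - m * coeff 1 v * constantCoeff q, by
      simp only [add_tsub_cancel_right, pow_mul, neg_one_sq, one_pow, pow_succ] at h
      push_cast at h
      linear_combination h⟩
  refine Ideal.mem_of_mul_mem_of_mk_mem_nonZeroDivisors ha ?_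
  have := Ideal.sub_mem _ hcq (Ideal.mul_mem_right (constantCoeff q) _ hva)
  rwa [← sub_mul, sub_sub_cancel] at this

theorem exists_X_pow_succ_dvd_sub_sub_subst (h2 : (2 : S) ∈ nonZeroDivisors S) {a : S}
    (ha : Ideal.Quotient.mk (Ideal.span {(2 : S)}) a ∈ nonZeroDivisors (S ⧸ Ideal.span {(2 : S)}))
    (hva : coeff 1 v - a ∈ Ideal.span {(2 : S)}) (hv : ubar = X * v)
    (hv0 : constantCoeff v = -1) (hf : f.subst ubar = -f) (hdvd : X ^ n ∣ f) :
    ∃ s : S, X ^ (n + 1) ∣ f - (C s * X ^ n - (C s * X ^ n).subst ubar) := by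
  have hs : HasSubst ubar := .of_constantCoeff_zero' (by simp [hv])
  obtain ⟨q, hq⟩ := hdvd
  have hlead : ∀ s : S, f - (C s * X ^ n - (C s * X ^ n).subst ubar)
      = X ^ n * (q - C s + C s * v ^ n) := by
    intro s
    have hC : (C s : S⟦X⟧).subst ubar = C s := subst_C s
    rw [subst_mul hs, hC, subst_pow hs, subst_X hs, hq, hv]
    ring
  suffices ∃ s : S, constantCoeff q = s - s * (-1) ^ n by
    obtain ⟨s, hq0⟩ := this
    refine ⟨s, ?_⟩
    rw [hlead, pow_succ]
    refine mul_dvd_mul_left _ (X_dvd_iff.2 ?_)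
    simp only [map_add, map_sub, map_mul, map_pow, constantCoeff_C, hq0, hv0]
    ring
  rcases n.even_or_odd with hn | hn
  · exact ⟨0, by simp [constantCoeff_eq_zero_of_even h2 hv hv0 hf hq hn]⟩
  · obtain ⟨s, hs⟩ :=
      Ideal.mem_span_singleton'.1 (constantCoeff_mem_span_two_of_odd ha hva hv hv0 hf hq hn)
    exact ⟨s, by rw [hn.neg_one_pow, ← hs]; ring⟩

theorem exists_sub_subst_eq_of_subst_eq_neg (h2 : (2 : S) ∈ nonZeroDivisors S) {a : S}
    (ha : Ideal.Quotient.mk (Ideal.span {(2 : S)}) a ∈ nonZeroDivisors (S ⧸ Ideal.span {(2 : S)}))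
    (hva : coeff 1 v - a ∈ Ideal.span {(2 : S)}) (hv : ubar = X * v)
    (hv0 : constantCoeff v = -1) (hinv : (ubar.subst ubar : S⟦X⟧) = X)
    (hf : f.subst ubar = -f) : ∃ g : S⟦X⟧, g - g.subst ubar = f := by
  have h0 : constantCoeff ubar = 0 := by simp [hv]
  have hs : HasSubst ubar := .of_constantCoeff_zero' h0
  let T : S⟦X⟧ →+ S⟦X⟧ :=
    AddMonoidHom.mk' (fun g => g - g.subst ubar) fun g g' => by rw [subst_add hs]; abel
  refine exists_eq_of_forall_X_pow_dvd_sub (T := T)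
    (fun n g hg => dvd_sub hg (X_pow_dvd_subst h0 hg)) fun n g hn => ?_
  have hanti : (f - T g).subst ubar = -(f - T g) := by
    simp only [T, AddMonoidHom.mk'_apply, subst_sub hs, subst_subst_of_subst_self_eq_X h0 hinv, hf]
    abel
  obtain ⟨s, hsdvd⟩ := exists_X_pow_succ_dvd_sub_sub_subst h2 ha hva hv hv0 hanti hn
  refine ⟨g + C s * X ^ n, by simp, ?_⟩
  rw [map_add, ← sub_sub]
  exact hsdvd

end Involution

theorem coeff_two_sub_mem_span_two {S : Type*} [CommRing S] {ubar : S⟦X⟧} {a : S}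
    (h : ubar - (X + C a * X ^ 2) ∈ Ideal.span {(2 : S⟦X⟧), X ^ 3}) :
    coeff 2 ubar - a ∈ Ideal.span {(2 : S)} := by
  obtain ⟨c, d, hcd⟩ := Ideal.mem_span_pair.1 h
  have h2 := congrArg (coeff 2) hcd
  rw [← map_ofNat C 2, map_add, coeff_mul_C, coeff_mul_X_pow', if_neg (by norm_num), add_zero,
    map_sub, map_add, coeff_X, if_neg (by norm_num), coeff_C_mul_X_pow, if_pos rfl,
    zero_add] at h2
  exact Ideal.mem_span_singleton'.2 ⟨coeff 2 c, h2⟩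

/-- Every `f` with `σ(f) = −f` is of the form `g − σ(g)`: the antifixed part
of the conjugation involution coincides with the image of `1 − σ`. -/
theorem antifixed_eq_image_one_sub_sigma
    {S : Type*} [CommRing S] (h2 : (2 : S) ∈ nonZeroDivisors S)
    (ubar : PowerSeries S) (h0 : PowerSeries.constantCoeff ubar = 0)
    (hcong : ubar + PowerSeries.X ∈ Ideal.span {(PowerSeries.X : PowerSeries S) ^ 2})
    (hinv : PowerSeries.substInto ubar ubar = PowerSeries.X)
    (a : S)
    (ha : Ideal.Quotient.mk (Ideal.span {(2 : S)}) a ∈ nonZeroDivisors (S ⧸ Ideal.span {(2 : S)}))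
    (hcong2 : ubar - (PowerSeries.X + PowerSeries.C a * PowerSeries.X ^ 2) ∈
      Ideal.span {(2 : PowerSeries S), PowerSeries.X ^ 3}) :
    {f : PowerSeries S | PowerSeries.substInto ubar f = -f} =
      {f : PowerSeries S | ∃ g : PowerSeries S, f = g - PowerSeries.substInto ubar g} := by
  have hinv' : (ubar.subst ubar : S⟦X⟧) = X := by rwa [← substInto_eq_subst h0]
  obtain ⟨t, ht⟩ := Ideal.mem_span_singleton.1 hcong
  have hv : ubar = X * (X * t - 1) := by linear_combination ht
  have hva : coeff 1 (X * t - 1) - a ∈ Ideal.span {(2 : S)} := by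
    simpa [hv] using coeff_two_sub_mem_span_two hcong2
  ext f
  simp only [Set.mem_ofPred_eq, substInto_eq_subst h0]
  constructor
  · intro hf
    obtain ⟨g, hg⟩ := exists_sub_subst_eq_of_subst_eq_neg h2 ha hva hv (by simp) hinv' hf
    exact ⟨g, hg.symm⟩
  · rintro ⟨g, rfl⟩
    rw [subst_sub (.of_constantCoeff_zero' h0), subst_subst_of_subst_self_eq_X h0 hinv']
    abel
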